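/- arXiv:1110.2447 — 3 statements merged into one kernel-verified Lean document; each statement's English description precedes it below -/
import Mathlib

section
/- Let E be an n-dimensional real inner product space and A : E → E an invertible self-adjoint linear map with K = tr|A|·id + Â as above. If det A > 0 then ker K is spanned by an element of the even exterior algebra Λ^{even}E^*, and if det A < 0 then ker K is spanned by an element of Λ^{odd}E^*. -/
/- We model the exterior algebra `Λ*E^*` of a finite-dimensional real inner product
space `E` by `ExteriorAlgebra ℝ E`, identifying `E ≅ E^*` via the inner product.
`extMul v` is exterior multiplication by `v^*` and `intMul v` is interior
multiplication (contraction) by `v`. -/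

open ExteriorAlgebra RealInnerProductSpace

variable {E : Type*} [NormedAddCommGroup E] [InnerProductSpace ℝ E] [FiniteDimensional ℝ E]

/-- Exterior multiplication `v^* ∧ ·` on `Λ*E^*` (under `E ≅ E^*`). -/
noncomputable def extMul (v : E) : ExteriorAlgebra ℝ E →ₗ[ℝ] ExteriorAlgebra ℝ E :=
  LinearMap.mulLeft ℝ (ExteriorAlgebra.ι ℝ v)

/-- Interior multiplication (contraction) `ι_v` on `Λ*E^*`. -/
noncomputable def intMul (v : E) : ExteriorAlgebra ℝ E →ₗ[ℝ] ExteriorAlgebra ℝ E :=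
  CliffordAlgebra.contractLeft ((innerSL ℝ v).toLinearMap)

/-- The Clifford action `c(v) = v^* ∧ · - ι_v`. -/
noncomputable def cl (v : E) : ExteriorAlgebra ℝ E →ₗ[ℝ] ExteriorAlgebra ℝ E :=
  extMul v - intMul v

/-- The Clifford action `ĉ(v) = v^* ∧ · + ι_v`. -/
noncomputable def hcl (v : E) : ExteriorAlgebra ℝ E →ₗ[ℝ] ExteriorAlgebra ℝ E :=
  extMul v + intMul v

/-- The operator `Â = Σ_{ij} a_{ij} c(e_i) ĉ(e_j)` associated to a linear map `A`
and a (orthonormal) family `e`, where `a_{ij} = ⟨A e_j, e_i⟩` is the matrix of `A`. -/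
noncomputable def hatA {n : ℕ} (e : Fin n → E) (A : E →ₗ[ℝ] E) :
    ExteriorAlgebra ℝ E →ₗ[ℝ] ExteriorAlgebra ℝ E :=
  ∑ i, ∑ j, ⟪A (e j), e i⟫ • (cl (e i) ∘ₗ hcl (e j))

/-- `K = tr|A|·id + Â`, where `tr|A|` is the sum of the absolute values of the
eigenvalues of the self-adjoint map `A`. -/
noncomputable def Kop {n : ℕ} (hn : Module.finrank ℝ E = n) (e : Fin n → E)
    (A : E →ₗ[ℝ] E) (hA : A.IsSymmetric) :
    ExteriorAlgebra ℝ E →ₗ[ℝ] ExteriorAlgebra ℝ E :=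
  (∑ i, |hA.eigenvalues hn i|) • LinearMap.id + hatA e A

/-! In an orthonormal eigenbasis `f` of `A` with eigenvalues `λ`, the basis independence of
`∑ⱼ c(A eⱼ) ĉ(eⱼ)` gives `Â = ∑ₖ λₖ c(fₖ) ĉ(fₖ)`, and `c(v) ĉ(v) = 2 v ∧ ι_v - |v|²`. Hence `K`
acts on the monomial `f_L = f_{k₁} ∧ ⋯ ∧ f_{kₘ}` by the scalar `∑ₖ (|λₖ| ± λₖ)`, with `+` iff
`k ∈ L`. Each term is nonnegative and vanishes iff `k ∈ L ↔ λₖ < 0`; as the monomials span and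
are eigenvectors, `ker K` is spanned by the wedge of the eigenvectors with negative eigenvalue.
Its degree is the number of negative eigenvalues, whose parity is the sign of `det A = ∏ₖ λₖ`. -/

section Clifford

variable {F : Type*} [NormedAddCommGroup F] [InnerProductSpace ℝ F]

lemma intMul_ι_mul (v w : F) (x : ExteriorAlgebra ℝ F) :
    intMul v (ι ℝ w * x) = ⟪v, w⟫ • x - ι ℝ w * intMul v x :=
  CliffordAlgebra.contractLeft_ι_mul _ w x

lemma cl_comp_hcl_self (v : F) :
    cl v ∘ₗ hcl v = (2 : ℝ) • (extMul v ∘ₗ intMul v) - ⟪v, v⟫ • LinearMap.id := by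
  refine LinearMap.ext fun x => ?_
  have hextext : ι ℝ v * (ι ℝ v * x) = 0 := by rw [← mul_assoc, ι_sq_zero, zero_mul]
  have hintint : intMul v (intMul v x) = 0 := CliffordAlgebra.contractLeft_contractLeft _ _
  simp only [cl, hcl, extMul, LinearMap.comp_apply, LinearMap.sub_apply, LinearMap.add_apply,
    map_add, LinearMap.mulLeft_apply, intMul_ι_mul, hextext, hintint, LinearMap.smul_apply,
    LinearMap.id_apply]
  module

noncomputable def clₗ : F →ₗ[ℝ] Module.End ℝ (ExteriorAlgebra ℝ F) :=
  (LinearMap.mul ℝ _).comp (ι ℝ) - CliffordAlgebra.contractLeft.comp (innerₗ F)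

noncomputable def hclₗ : F →ₗ[ℝ] Module.End ℝ (ExteriorAlgebra ℝ F) :=
  (LinearMap.mul ℝ _).comp (ι ℝ) + CliffordAlgebra.contractLeft.comp (innerₗ F)

-- `clHclₗ u v` is `cl u ∘ₗ hcl v` by `rfl`.
noncomputable def clHclₗ : F →ₗ[ℝ] F →ₗ[ℝ] Module.End ℝ (ExteriorAlgebra ℝ F) :=
  (LinearMap.llcomp ℝ _ _ _).compl₁₂ clₗ hclₗ

lemma OrthonormalBasis.sum_bilin_diag_eq {ι κ M : Type*} [Fintype ι] [Fintype κ]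
    [AddCommGroup M] [Module ℝ M] (B : F →ₗ[ℝ] F →ₗ[ℝ] M)
    (e : OrthonormalBasis ι ℝ F) (b : OrthonormalBasis κ ℝ F) :
    ∑ i, B (e i) (e i) = ∑ k, B (b k) (b k) := by
  calc ∑ i, B (e i) (e i) = ∑ i, B (e i) (∑ k, ⟪b k, e i⟫ • b k) := by
        simp only [b.sum_repr']
    _ = ∑ k, B (∑ i, ⟪e i, b k⟫ • e i) (b k) := by
        simp only [map_sum, map_smul, LinearMap.sum_apply, LinearMap.smul_apply, real_inner_comm]
        exact Finset.sum_comm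
    _ = ∑ k, B (b k) (b k) := by simp only [e.sum_repr']

lemma hatA_eq_sum {n : ℕ} (e : OrthonormalBasis (Fin n) ℝ F) (A : F →ₗ[ℝ] F) :
    hatA e A = ∑ j, cl (A (e j)) ∘ₗ hcl (e j) := by
  rw [hatA, Finset.sum_comm]
  refine Finset.sum_congr rfl fun j _ => ?_
  conv_rhs => rw [← e.sum_repr' (A (e j))]
  change _ = clHclₗ _ (e j)
  simp only [map_sum, map_smul, LinearMap.sum_apply, LinearMap.smul_apply, real_inner_comm]
  rfl

lemma hatA_eq_sum_eigenvalues {n : ℕ} {κ : Type*} [Fintype κ] (e : OrthonormalBasis (Fin n) ℝ F)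
    (A : F →ₗ[ℝ] F) (b : OrthonormalBasis κ ℝ F) (μ : κ → ℝ) (hb : ∀ k, A (b k) = μ k • b k) :
    hatA e A = ∑ k, μ k • (cl (b k) ∘ₗ hcl (b k)) := by
  calc hatA e A = ∑ j, (clHclₗ ∘ₗ A) (e j) (e j) := hatA_eq_sum e A
    _ = ∑ k, (clHclₗ ∘ₗ A) (b k) (b k) := e.sum_bilin_diag_eq _ b
    _ = ∑ k, μ k • (cl (b k) ∘ₗ hcl (b k)) := by
        simp only [LinearMap.comp_apply, hb, map_smul, LinearMap.smul_apply]
        rfl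

section Wedge

variable {κ : Type*} (f : κ → F)

noncomputable def wedge (L : List κ) : ExteriorAlgebra ℝ F :=
  (L.map fun k => ι ℝ (f k)).prod

@[simp] lemma wedge_nil : wedge f [] = 1 := rfl

@[simp] lemma wedge_cons (k : κ) (L : List κ) : wedge f (k :: L) = ι ℝ (f k) * wedge f L :=
  List.prod_cons

lemma wedge_mem_evenOdd (L : List κ) :
    wedge f L ∈ CliffordAlgebra.evenOdd (0 : QuadraticForm ℝ F) L.length := by
  simpa [wedge] using SetLike.list_prod_map_mem_graded L (fun _ => (1 : ZMod 2))
    (fun k => ι ℝ (f k)) fun k _ => CliffordAlgebra.ι_mem_evenOdd_one _ (f k)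

variable {f}

lemma wedge_mem_span_of_perm {L M : List κ} (h : L.Perm M) : wedge f L ∈ ℝ ∙ wedge f M := by
  induction h with
  | nil => exact Submodule.mem_span_singleton_self _
  | cons k _ ih =>
    obtain ⟨c, hc⟩ := Submodule.mem_span_singleton.mp ih
    exact Submodule.mem_span_singleton.mpr ⟨c, by rw [wedge_cons, wedge_cons, ← hc, mul_smul_comm]⟩
  | swap a b L =>
    have hab : ι ℝ (f b) * ι ℝ (f a) = -(ι ℝ (f a) * ι ℝ (f b)) :=
      eq_neg_of_add_eq_zero_left (ι_add_mul_swap _ _)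
    rw [wedge_cons, wedge_cons, wedge_cons, wedge_cons, ← mul_assoc, ← mul_assoc, hab, neg_mul]
    exact Submodule.neg_mem _ (Submodule.mem_span_singleton_self _)
  | trans _ _ ih₁ ih₂ => exact Submodule.mem_span_singleton_trans ih₁ ih₂

lemma ι_mul_wedge_of_mem [DecidableEq κ] {k : κ} {L : List κ} (hk : k ∈ L) :
    ι ℝ (f k) * wedge f L = 0 := by
  obtain ⟨c, hc⟩ := Submodule.mem_span_singleton.mp
    (wedge_mem_span_of_perm (f := f) (List.perm_cons_erase hk))
  rw [← hc, mul_smul_comm, wedge_cons, ← mul_assoc, ι_sq_zero, zero_mul, smul_zero]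

lemma extMul_intMul_wedge [DecidableEq κ] (hf : Orthonormal ℝ f) (k : κ) (L : List κ) :
    extMul (f k) (intMul (f k) (wedge f L)) = if k ∈ L then wedge f L else 0 := by
  induction L with
  | nil => simp [intMul, CliffordAlgebra.contractLeft_one]
  | cons a L ih =>
    have hswap : ι ℝ (f k) * ι ℝ (f a) = -(ι ℝ (f a) * ι ℝ (f k)) :=
      eq_neg_of_add_eq_zero_left (ι_add_mul_swap _ _)
    have hexpand : extMul (f k) (intMul (f k) (wedge f (a :: L))) =
        ⟪f k, f a⟫ • (ι ℝ (f k) * wedge f L) +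
          ι ℝ (f a) * extMul (f k) (intMul (f k) (wedge f L)) := by
      simp only [extMul, LinearMap.mulLeft_apply, wedge_cons, intMul_ι_mul, mul_sub,
        mul_smul_comm, ← mul_assoc, hswap, neg_mul, sub_neg_eq_add]
    rw [hexpand, ih, orthonormal_iff_ite.mp hf]
    by_cases hka : k = a
    · subst hka
      by_cases hkL : k ∈ L <;> simp [hkL, ι_mul_wedge_of_mem]
    · by_cases hkL : k ∈ L <;> simp [hka, hkL]

lemma cl_comp_hcl_wedge [DecidableEq κ] (hf : Orthonormal ℝ f) (k : κ) (L : List κ) :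
    (cl (f k) ∘ₗ hcl (f k)) (wedge f L) = (if k ∈ L then 1 else -1 : ℝ) • wedge f L := by
  rw [cl_comp_hcl_self, real_inner_self_eq_norm_sq, hf.1 k]
  simp only [LinearMap.sub_apply, LinearMap.smul_apply, LinearMap.comp_apply, LinearMap.id_apply,
    extMul_intMul_wedge hf]
  split_ifs <;> module

lemma span_wedge_nodup [Fintype κ] [DecidableEq κ] (b : Module.Basis κ ℝ F) :
    Submodule.span ℝ {x | ∃ L : List κ, L.Nodup ∧ wedge b L = x} = ⊤ := by
  set W := Submodule.span ℝ {x | ∃ L : List κ, L.Nodup ∧ wedge b L = x}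
  have hbasis : ∀ k, ∀ y ∈ W, ι ℝ (b k) * y ∈ W := by
    intro k y hy
    refine (Submodule.span_le (p := W.comap (LinearMap.mulLeft ℝ (ι ℝ (b k))))).mpr ?_ hy
    rintro _ ⟨L, hL, rfl⟩
    by_cases hk : k ∈ L
    · simp [ι_mul_wedge_of_mem hk]
    · exact Submodule.subset_span ⟨k :: L, List.nodup_cons.mpr ⟨hk, hL⟩, wedge_cons _ _ _⟩
  have hι : ∀ v, ∀ y ∈ W, ι ℝ v * y ∈ W := by
    intro v y hy
    rw [← b.sum_repr v, map_sum, Finset.sum_mul]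
    exact W.sum_mem fun k _ => by
      rw [map_smul, smul_mul_assoc]; exact W.smul_mem _ (hbasis k y hy)
  have hmul : ∀ x, ∀ y ∈ W, x * y ∈ W := by
    intro x
    induction x using ExteriorAlgebra.induction with
    | algebraMap r => intro y hy; rw [← Algebra.smul_def]; exact W.smul_mem r hy
    | ι v => exact hι v
    | mul a c iha ihc => intro y hy; rw [mul_assoc]; exact iha _ (ihc y hy)
    | add a c iha ihc => intro y hy; rw [add_mul]; exact W.add_mem (iha y hy) (ihc y hy)
  refine eq_top_iff.mpr fun x _ => ?_
  simpa using hmul x 1 (Submodule.subset_span ⟨[], List.nodup_nil, rfl⟩)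

end Wedge

end Clifford

lemma ker_eq_span_of_span_eigenvectors {K V : Type*} [Field K] [AddCommGroup V] [Module K V]
    (T : Module.End K V) (S : Set V) (ω : V) (hS : Submodule.span K S = ⊤)
    (heig : ∀ x ∈ S, ∃ c : K, T x = c • x ∧ (c = 0 → x ∈ K ∙ ω)) (hω : T ω = 0) :
    LinearMap.ker T = K ∙ ω := by
  set N := ⨆ c ∈ ({0}ᶜ : Set K), T.eigenspace c
  have hωker : K ∙ ω ≤ LinearMap.ker T := (Submodule.span_singleton_le_iff_mem _ _).mpr hω
  have hsup : (K ∙ ω) ⊔ N = ⊤ := by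
    refine eq_top_iff.mpr (hS ▸ Submodule.span_le.mpr fun x hx => ?_)
    obtain ⟨c, hTx, hc⟩ := heig x hx
    by_cases h0 : c = 0
    · exact Submodule.mem_sup_left (hc h0)
    · refine Submodule.mem_sup_right ?_
      exact (le_biSup T.eigenspace (Set.mem_compl_singleton_iff.mpr h0))
        (Module.End.mem_eigenspace_iff.mpr hTx)
  have hdisj : N ⊓ LinearMap.ker T = ⊥ := by
    rw [← T.eigenspace_zero, inf_comm, ← disjoint_iff]
    exact T.eigenspaces_iSupIndep.disjoint_biSup (Set.notMem_compl_iff.mpr rfl)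
  calc LinearMap.ker T = ((K ∙ ω) ⊔ N) ⊓ LinearMap.ker T := by rw [hsup, top_inf_eq]
    _ = K ∙ ω := by rw [sup_inf_assoc_of_le _ hωker, hdisj, sup_bot_eq]

section Sign

variable {ι R : Type*} [CommRing R] [LinearOrder R] [IsStrictOrderedRing R]

open Finset

lemma Finset.prod_eq_neg_one_pow_mul_prod_abs (s : Finset ι) (f : ι → R) :
    ∏ i ∈ s, f i = (-1) ^ #{i ∈ s | f i < 0} * ∏ i ∈ s, |f i| := by
  calc ∏ i ∈ s, f i = ∏ i ∈ s, (if f i < 0 then -1 else 1) * |f i| := by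
        refine prod_congr rfl fun i _ => ?_
        split_ifs with h
        · rw [abs_of_neg h, neg_one_mul, neg_neg]
        · rw [abs_of_nonneg (not_lt.mp h), one_mul]
    _ = (-1) ^ #{i ∈ s | f i < 0} * ∏ i ∈ s, |f i| := by
        rw [prod_mul_distrib, prod_ite, prod_const, prod_const, one_pow, mul_one]

lemma Finset.prod_pos_iff_even_card_neg {s : Finset ι} {f : ι → R} (hf : ∀ i ∈ s, f i ≠ 0) :
    0 < ∏ i ∈ s, f i ↔ Even #{i ∈ s | f i < 0} := by
  have habs : 0 < ∏ i ∈ s, |f i| := prod_pos fun i hi => abs_pos.mpr (hf i hi)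
  rw [prod_eq_neg_one_pow_mul_prod_abs]
  rcases Nat.even_or_odd #{i ∈ s | f i < 0} with h | h
  · simp [h.neg_one_pow, h, habs]
  · simp [h.neg_one_pow, Nat.not_even_iff_odd.mpr h, habs.le]

lemma Finset.prod_neg_iff_odd_card_neg {s : Finset ι} {f : ι → R} (hf : ∀ i ∈ s, f i ≠ 0) :
    ∏ i ∈ s, f i < 0 ↔ Odd #{i ∈ s | f i < 0} := by
  rw [← Nat.not_even_iff_odd, ← prod_pos_iff_even_card_neg hf, not_lt,
    le_iff_lt_or_eq, or_iff_left (prod_ne_zero_iff.mpr hf)]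

end Sign

lemma abs_add_ite_nonneg (a : ℝ) (p : Prop) [Decidable p] : 0 ≤ |a| + if p then a else -a := by
  split_ifs <;> linarith [neg_abs_le a, le_abs_self a]

lemma abs_add_ite_eq_zero_iff {a : ℝ} (ha : a ≠ 0) (p : Prop) [Decidable p] :
    (|a| + if p then a else -a) = 0 ↔ (p ↔ a < 0) := by
  rcases ha.lt_or_gt with h | h <;> by_cases hp : p <;>
    simp [hp, h, abs_of_neg, abs_of_pos, h.ne, h.ne', not_lt.mpr h.le]

section Kop

variable {n : ℕ} {A : E →ₗ[ℝ] E} (hA : A.IsSymmetric) (hn : Module.finrank ℝ E = n)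

lemma LinearMap.IsSymmetric.eigenvalues_ne_zero (hinj : Function.Injective A) (k : Fin n) :
    hA.eigenvalues hn k ≠ 0 := by
  intro h
  refine (hA.eigenvectorBasis hn).orthonormal.ne_zero k (hinj ?_)
  rw [hA.apply_eigenvectorBasis, h, map_zero]
  simp

noncomputable def negEigenWedge : ExteriorAlgebra ℝ E :=
  wedge (hA.eigenvectorBasis hn) ({k | hA.eigenvalues hn k < 0} : Finset (Fin n)).sort

open Finset in
lemma negEigenWedge_mem_evenOdd :
    negEigenWedge hA hn ∈ CliffordAlgebra.evenOdd (0 : QuadraticForm ℝ E)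
      (#{k | hA.eigenvalues hn k < 0} : ℕ) := by
  have h := wedge_mem_evenOdd (hA.eigenvectorBasis hn)
    ({k | hA.eigenvalues hn k < 0} : Finset (Fin n)).sort
  rwa [Finset.length_sort] at h

lemma Kop_apply_wedge (e : OrthonormalBasis (Fin n) ℝ E) (L : List (Fin n)) :
    Kop hn e A hA (wedge (hA.eigenvectorBasis hn) L) =
      (∑ k, (|hA.eigenvalues hn k| +
          if k ∈ L then hA.eigenvalues hn k else -hA.eigenvalues hn k)) •
        wedge (hA.eigenvectorBasis hn) L := by
  rw [Kop, hatA_eq_sum_eigenvalues e A _ _ (hA.apply_eigenvectorBasis hn)]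
  simp only [LinearMap.add_apply, LinearMap.smul_apply, LinearMap.id_apply, LinearMap.sum_apply,
    cl_comp_hcl_wedge (hA.eigenvectorBasis hn).orthonormal, smul_smul, Finset.sum_add_distrib,
    add_smul, Finset.sum_smul]
  congr 1
  refine Finset.sum_congr rfl fun k _ => ?_
  split_ifs <;> simp

theorem ker_Kop_eq_span (e : OrthonormalBasis (Fin n) ℝ E) (hinj : Function.Injective A) :
    LinearMap.ker (Kop hn e A hA) = ℝ ∙ negEigenWedge hA hn := by
  set eig := hA.eigenvalues hn
  have hzero : ∀ L : List (Fin n),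
      (∑ k, (|eig k| + if k ∈ L then eig k else -eig k)) = 0 ↔ ∀ k, (k ∈ L ↔ eig k < 0) := by
    intro L
    rw [Finset.sum_eq_zero_iff_of_nonneg fun k _ => abs_add_ite_nonneg _ _]
    simp only [Finset.mem_univ, true_implies]
    exact forall_congr' fun k => abs_add_ite_eq_zero_iff (hA.eigenvalues_ne_zero hn hinj k) _
  have hneg : ∀ k, k ∈ ({k | eig k < 0} : Finset (Fin n)).sort ↔ eig k < 0 := by simp
  have hspan := span_wedge_nodup (hA.eigenvectorBasis hn).toBasis
  rw [OrthonormalBasis.coe_toBasis] at hspan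
  refine ker_eq_span_of_span_eigenvectors _ _ _ hspan ?_ ?_
  · rintro _ ⟨L, hL, rfl⟩
    refine ⟨_, Kop_apply_wedge hA hn e L, fun h0 => wedge_mem_span_of_perm ?_⟩
    refine (List.perm_ext_iff_of_nodup hL (Finset.sort_nodup _ _)).mpr fun k => ?_
    rw [(hzero L).mp h0 k, hneg k]
  · rw [negEigenWedge, Kop_apply_wedge, (hzero _).mpr hneg, zero_smul]

end Kop

/-- For an invertible self-adjoint `A` with `K = tr|A|·id + Â` : if `det A > 0` the
kernel of `K` is spanned by an element of the even part `Λ^{even}E^*`, and if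
`det A < 0` it is spanned by an element of the odd part `Λ^{odd}E^*`.
(The even/odd parts of `Λ*E^*` are `CliffordAlgebra.evenOdd 0 0/1`.) -/
theorem Kop_ker_even_odd {n : ℕ} (hn : Module.finrank ℝ E = n)
    (e : OrthonormalBasis (Fin n) ℝ E) (A : E →ₗ[ℝ] E)
    (hA : A.IsSymmetric) (hinv : Function.Bijective A) :
    (0 < LinearMap.det A → ∃ ω : ExteriorAlgebra ℝ E,
      ω ∈ CliffordAlgebra.evenOdd (0 : QuadraticForm ℝ E) 0 ∧
      LinearMap.ker (Kop hn (⇑e) A hA) = Submodule.span ℝ {ω}) ∧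
    (LinearMap.det A < 0 → ∃ ω : ExteriorAlgebra ℝ E,
      ω ∈ CliffordAlgebra.evenOdd (0 : QuadraticForm ℝ E) 1 ∧
      LinearMap.ker (Kop hn (⇑e) A hA) = Submodule.span ℝ {ω}) := by
  have hker := ker_Kop_eq_span hA hn e hinv.injective
  have hne : ∀ k ∈ Finset.univ, hA.eigenvalues hn k ≠ 0 :=
    fun k _ => hA.eigenvalues_ne_zero hn hinv.injective k
  rw [hA.det_eq_prod_eigenvalues hn]
  simp only [RCLike.ofReal_real_eq_id, id]
  refine ⟨fun hpos => ⟨_, ?_, hker⟩, fun hneg => ⟨_, ?_, hker⟩⟩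
  · rw [← ZMod.natCast_eq_zero_iff_even.mpr ((Finset.prod_pos_iff_even_card_neg hne).mp hpos)]
    exact negEigenWedge_mem_evenOdd hA hn
  · rw [← ZMod.natCast_eq_one_iff_odd.mpr ((Finset.prod_neg_iff_odd_card_neg hne).mp hneg)]
    exact negEigenWedge_mem_evenOdd hA hn
end

section
/- Let A : E → E be a self-adjoint linear map on an n-dimensional real inner product space, diagonalized in an orthonormal basis {e_j} with eigenvalues λ_j, where λ_j > 0 for j ≤ p and λ_j < 0 for j > p. Then the element e^{p+1} ∧ e^{p+2} ∧ ⋯ ∧ e^n of Λ*E^* lies in the kernel of K = tr|A|·id + Σ_j λ_j c(e_j)ĉ(e_j). -/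
/- We model the exterior algebra `Λ*E^*` of a finite-dimensional real inner product
space `E` by `ExteriorAlgebra ℝ E`, identifying `E ≅ E^*` via the inner product.
`extMul v` is exterior multiplication by `v^*` and `intMul v` is interior
multiplication (contraction) by `v`. -/

open ExteriorAlgebra RealInnerProductSpace

variable {E : Type*} [NormedAddCommGroup E] [InnerProductSpace ℝ E] [FiniteDimensional ℝ E]

/-- The wedge product `v 0 ∧ v 1 ∧ ⋯ ∧ v (k-1)` in the exterior algebra. -/
noncomputable def wedgeList {k : ℕ} (v : Fin k → E) : ExteriorAlgebra ℝ E :=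
  (List.ofFn fun i => ExteriorAlgebra.ι ℝ (v i)).prod

/-! Write `ε_u = extMul u` and `ι_u = intMul u`. For a unit vector `u`, the anticommutation
relation `ι_u ε_u + ε_u ι_u = ‖u‖²` turns `c(u) ĉ(u) = ε_u ι_u - ι_u ε_u` into `+1` on forms
killed by `ε_u` (those containing `u^*`) and into `-1` on forms killed by `ι_u`. The form
`e^{p+1} ∧ ⋯ ∧ e^n` contains `e^j` exactly when `λ_j < 0`, so `λ_j c(e_j) ĉ(e_j)` multiplies it
by `-|λ_j|` for every `j`, and these terms cancel `tr|A|`. -/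

section Clifford

variable {V : Type*} [NormedAddCommGroup V] [InnerProductSpace ℝ V]

theorem intMul_ι_mul_s9 (u a : V) (x : ExteriorAlgebra ℝ V) :
    intMul u (ExteriorAlgebra.ι ℝ a * x) = ⟪u, a⟫ • x - ExteriorAlgebra.ι ℝ a * intMul u x :=
  CliffordAlgebra.contractLeft_ι_mul _ a x

theorem intMul_one (u : V) : intMul u (1 : ExteriorAlgebra ℝ V) = 0 :=
  CliffordAlgebra.contractLeft_one _ _

theorem intMul_intMul (u : V) (x : ExteriorAlgebra ℝ V) : intMul u (intMul u x) = 0 :=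
  CliffordAlgebra.contractLeft_contractLeft _ x

theorem extMul_extMul (u : V) (x : ExteriorAlgebra ℝ V) : extMul u (extMul u x) = 0 := by
  simp only [extMul, LinearMap.mulLeft_apply, ← mul_assoc, ExteriorAlgebra.ι_sq_zero, zero_mul]

theorem intMul_extMul_add_extMul_intMul (u : V) (x : ExteriorAlgebra ℝ V) :
    intMul u (extMul u x) + extMul u (intMul u x) = ‖u‖ ^ 2 • x := by
  rw [extMul, LinearMap.mulLeft_apply, LinearMap.mulLeft_apply, intMul_ι_mul_s9,
    real_inner_self_eq_norm_sq, sub_add_cancel]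

theorem cl_hcl_apply (u : V) (x : ExteriorAlgebra ℝ V) :
    cl u (hcl u x) = extMul u (intMul u x) - intMul u (extMul u x) := by
  simp only [cl, hcl, LinearMap.sub_apply, LinearMap.add_apply, map_add, extMul_extMul,
    intMul_intMul]
  abel

theorem cl_hcl_apply_of_extMul_eq_zero {u : V} (hu : ‖u‖ = 1) {x : ExteriorAlgebra ℝ V}
    (hx : extMul u x = 0) : cl u (hcl u x) = x := by
  have h := intMul_extMul_add_extMul_intMul u x
  rw [hx, map_zero, zero_add, hu, one_pow, one_smul] at h
  rw [cl_hcl_apply, h, hx, map_zero, sub_zero]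

theorem cl_hcl_apply_of_intMul_eq_zero {u : V} (hu : ‖u‖ = 1) {x : ExteriorAlgebra ℝ V}
    (hx : intMul u x = 0) : cl u (hcl u x) = -x := by
  have h := intMul_extMul_add_extMul_intMul u x
  rw [hx, map_zero, add_zero, hu, one_pow, one_smul] at h
  rw [cl_hcl_apply, h, hx, map_zero, zero_sub]

theorem extMul_wedgeList_eq_zero {k : ℕ} (v : Fin k → V) (i : Fin k) :
    extMul (v i) (wedgeList v) = 0 :=
  ExteriorAlgebra.ι_mul_prod_list v i

theorem wedgeList_succ {k : ℕ} (v : Fin (k + 1) → V) :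
    wedgeList v = ExteriorAlgebra.ι ℝ (v 0) * wedgeList fun i => v i.succ := by
  simp only [wedgeList, List.ofFn_succ, List.prod_cons]

theorem intMul_wedgeList_eq_zero (u : V) {k : ℕ} (v : Fin k → V) (h : ∀ i, ⟪u, v i⟫ = 0) :
    intMul u (wedgeList v) = 0 := by
  induction k with
  | zero => rw [wedgeList, List.ofFn_zero, List.prod_nil]; exact intMul_one u
  | succ k ih =>
    rw [wedgeList_succ, intMul_ι_mul_s9, h 0, ih _ fun i => h i.succ, zero_smul, mul_zero,
      sub_zero]

theorem smul_cl_hcl_apply_eq_neg_abs_smul {u : V} (hu : ‖u‖ = 1) {c : ℝ}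
    {x : ExteriorAlgebra ℝ V}
    (h : (0 < c ∧ intMul u x = 0) ∨ (c < 0 ∧ extMul u x = 0)) :
    c • cl u (hcl u x) = -|c| • x := by
  rcases h with ⟨hc, hx⟩ | ⟨hc, hx⟩
  · rw [cl_hcl_apply_of_intMul_eq_zero hu hx, abs_of_pos hc, smul_neg, neg_smul]
  · rw [cl_hcl_apply_of_extMul_eq_zero hu hx, abs_of_neg hc, neg_neg]

end Clifford

/-- Indices are `0`-based: the paper's `e^{p+1}, …, e^n` are `e p, …, e (n - 1)` here. -/
theorem top_negative_wedge_mem_ker {n p : ℕ}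
    (e : OrthonormalBasis (Fin n) ℝ E)
    (lam : Fin n → ℝ)
    (hpos : ∀ j : Fin n, (j : ℕ) < p → 0 < lam j)
    (hneg : ∀ j : Fin n, p ≤ (j : ℕ) → lam j < 0) :
    ((∑ j, |lam j|) • (LinearMap.id : ExteriorAlgebra ℝ E →ₗ[ℝ] ExteriorAlgebra ℝ E)
        + ∑ j, lam j • (cl (e j) ∘ₗ hcl (e j)))
      (wedgeList fun i : Fin (n - p) => e ⟨p + (i : ℕ), by have := i.isLt; omega⟩) = 0 := by
  set ω := wedgeList fun i : Fin (n - p) => e ⟨p + (i : ℕ), by have := i.isLt; omega⟩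
  have h_summand : ∀ j, lam j • cl (e j) (hcl (e j) ω) = -|lam j| • ω := by
    intro j
    apply smul_cl_hcl_apply_eq_neg_abs_smul (e.orthonormal.1 j)
    rcases lt_or_ge (j : ℕ) p with hj | hj
    · refine .inl ⟨hpos j hj, intMul_wedgeList_eq_zero _ _ fun i => ?_⟩
      exact e.orthonormal.2 (Fin.ne_of_val_ne (by simp only; omega))
    · refine .inr ⟨hneg j hj, ?_⟩
      obtain ⟨i, hi⟩ : ∃ i : Fin (n - p), (⟨p + i, by have := i.isLt; omega⟩ : Fin n) = j :=
        ⟨⟨j - p, by omega⟩, Fin.ext (by simp only; omega)⟩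
      rw [← hi]
      exact extMul_wedgeList_eq_zero _ i
  simp only [LinearMap.add_apply, LinearMap.smul_apply, LinearMap.id_apply, LinearMap.sum_apply,
    LinearMap.comp_apply, h_summand, ← Finset.sum_smul, ← add_smul, Finset.sum_neg_distrib,
    add_neg_cancel, zero_smul]
end

section
/- Let D be a skew-adjoint Fredholm operator on a real Hilbert space. Then dim ker D mod 2 is invariant under continuous deformation of D through skew-adjoint Fredholm operators: if D_t, t ∈ [0,1], is a norm-continuous path of bounded skew-adjoint Fredholm operators, then dim ker D_0 ≡ dim ker D_1 (mod 2). -/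
/-!
The parity of `dim ker` is locally constant among skew-adjoint operators. Near a skew-adjoint
`D₀` with closed range put `K = ker D₀`; then `range D₀ = Kᗮ`, so the `Kᗮ`-block of `D₀` is
invertible, and it stays invertible for every nearby `T`. Eliminating that block identifies
`ker T` with the kernel of the Schur complement, a skew-symmetric endomorphism `S` of the
finite-dimensional space `K`. Finally `dim ker S ≡ dim K (mod 2)`: `S` is invertible on
`(ker S)ᗮ`, and an invertible skew-symmetric map lives in even dimension since
`det S = det Sᵀ = (-1)ⁿ det S`. A locally constant function on `[0, 1]` is constant.
-/

/-- A bounded operator on a real Hilbert space is Fredholm if it has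
finite-dimensional kernel and cokernel and closed range. -/
def IsFredholm {H : Type*} [NormedAddCommGroup H] [InnerProductSpace ℝ H]
    (T : H →L[ℝ] H) : Prop :=
  FiniteDimensional ℝ (LinearMap.ker (T : H →ₗ[ℝ] H)) ∧
    FiniteDimensional ℝ (H ⧸ LinearMap.range (T : H →ₗ[ℝ] H)) ∧
    IsClosed (LinearMap.range (T : H →ₗ[ℝ] H) : Set H)

open Module RealInnerProductSpace Filter Topology
open scoped Matrix

section FiniteDimensional

variable {V : Type*} [NormedAddCommGroup V] [InnerProductSpace ℝ V] [FiniteDimensional ℝ V]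

theorem LinearMap.det_eq_zero_of_skew_of_odd_finrank {S : V →ₗ[ℝ] V}
    (hS : ∀ x y, ⟪S x, y⟫ = -⟪x, S y⟫) (hodd : Odd (finrank ℝ V)) : LinearMap.det S = 0 := by
  have hadj : LinearMap.adjoint S = -S :=
    ((LinearMap.eq_adjoint_iff _ _).mpr fun x y => by
      rw [LinearMap.neg_apply, inner_neg_left, hS, neg_neg]).symm
  let b := (stdOrthonormalBasis ℝ V).toBasis
  have hM : (LinearMap.toMatrix b b S)ᴴ = -LinearMap.toMatrix b b S := by
    rw [← LinearMap.toMatrix_adjoint, hadj, map_neg]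
  have hdet := congrArg Matrix.det hM
  rw [Matrix.det_conjTranspose, Matrix.det_neg, Fintype.card_fin, hodd.neg_one_pow,
    star_trivial, LinearMap.det_toMatrix] at hdet
  linarith

theorem LinearMap.finrank_ker_mod_two_of_skew {S : V →ₗ[ℝ] V}
    (hS : ∀ x y, ⟪S x, y⟫ = -⟪x, S y⟫) :
    finrank ℝ (LinearMap.ker S) % 2 = finrank ℝ V % 2 := by
  set N := LinearMap.ker S
  have hmaps : ∀ x ∈ Nᗮ, S x ∈ Nᗮ := fun x _ u (hu : S u = 0) => by
    rw [real_inner_comm, hS, hu, inner_zero_right, neg_zero]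
  set T := S.restrict hmaps
  have hT : ∀ x y : Nᗮ, ⟪T x, y⟫ = -⟪x, T y⟫ := fun x y => hS x y
  have hker : LinearMap.ker T = ⊥ := by
    refine LinearMap.ker_eq_bot'.mpr fun x hx => Subtype.ext ?_
    have hxN : (x : V) ∈ N := congrArg Subtype.val hx
    exact Submodule.disjoint_def.mp N.orthogonal_disjoint _ hxN x.2
  obtain ⟨m, hm⟩ : Even (finrank ℝ Nᗮ) := by
    by_contra hodd
    exact LinearMap.det_eq_zero_iff_ker_ne_bot.mp
      (LinearMap.det_eq_zero_of_skew_of_odd_finrank hT (Nat.not_even_iff_odd.mp hodd)) hker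
  have := N.finrank_add_finrank_orthogonal
  omega

end FiniteDimensional

section Compression

variable {H : Type*} [NormedAddCommGroup H] [InnerProductSpace ℝ H]
  (K : Submodule ℝ H) [K.HasOrthogonalProjection] (T : H →L[ℝ] H)

noncomputable def orthogonalCompression : Kᗮ →L[ℝ] Kᗮ :=
  Kᗮ.orthogonalProjectionOnto ∘L T ∘L Kᗮ.subtypeL

/-- When `orthogonalCompression K T` is invertible, `schurLift K T x` is the unique point of
`x + Kᗮ` that `T` maps into `K`. -/
noncomputable def schurLift : K →L[ℝ] H :=
  K.subtypeL - Kᗮ.subtypeL ∘L Ring.inverse (orthogonalCompression K T) ∘L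
    Kᗮ.orthogonalProjectionOnto ∘L T ∘L K.subtypeL

/-- Writing `T = [[A, B], [C, E]]` along `H = K ⊕ Kᗮ`, this is the Schur complement
`A - B E⁻¹ C`. -/
noncomputable def schurComplement : K →L[ℝ] K :=
  K.orthogonalProjectionOnto ∘L T ∘L schurLift K T

variable {K T}

theorem schurLift_sub_mem_orthogonal (x : K) : schurLift K T x - x ∈ Kᗮ := by
  simp [schurLift]

theorem schurLift_injective : Function.Injective (schurLift K T) := by
  refine (injective_iff_map_eq_zero _).mpr fun x hx => Subtype.ext ?_
  have hxK : (x : H) ∈ Kᗮ := by simpa [hx] using neg_mem (schurLift_sub_mem_orthogonal (T := T) x)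
  exact Submodule.disjoint_def.mp K.orthogonal_disjoint _ x.2 hxK

theorem inner_schurLift_right {u : H} (hu : u ∈ K) (y : K) :
    ⟪u, schurLift K T y⟫ = ⟪u, y⟫ := by
  rw [← sub_eq_zero, ← inner_sub_right]
  exact Submodule.inner_right_of_mem_orthogonal hu (schurLift_sub_mem_orthogonal y)

variable (hE : IsUnit (orthogonalCompression K T))
include hE

theorem apply_schurLift_mem (x : K) : T (schurLift K T x) ∈ K := by
  suffices Kᗮ.orthogonalProjectionOnto (T (schurLift K T x)) = 0 by
    rwa [Submodule.orthogonalProjectionOnto_eq_zero_iff, K.orthogonal_orthogonal] at this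
  simpa [schurLift, orthogonalCompression, sub_eq_zero] using
    (congrArg (· (Kᗮ.orthogonalProjectionOnto (T x))) (Ring.mul_inverse_cancel _ hE)).symm

theorem coe_schurComplement_apply (x : K) : (schurComplement K T x : H) = T (schurLift K T x) :=
  Submodule.starProjection_eq_self_iff.mpr (apply_schurLift_mem hE x)

theorem ker_le_range_schurLift :
    LinearMap.ker (T : H →ₗ[ℝ] H) ≤ LinearMap.range (schurLift K T : K →ₗ[ℝ] H) := by
  intro y (hy : T y = 0)
  let x := K.orthogonalProjectionOnto y
  have hw : y - schurLift K T x ∈ Kᗮ := by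
    have hsplit : y - schurLift K T x = (y - K.starProjection y) - (schurLift K T x - x) := by
      simp [x]
    rw [hsplit]
    exact sub_mem (K.sub_starProjection_mem_orthogonal y) (schurLift_sub_mem_orthogonal x)
  have hEw : orthogonalCompression K T ⟨_, hw⟩ = 0 := by
    simp only [orthogonalCompression, ContinuousLinearMap.comp_apply, Submodule.subtypeL_apply,
      map_sub, hy, zero_sub, neg_mem_iff, Submodule.orthogonalProjectionOnto_eq_zero_iff]
    exact K.le_orthogonal_orthogonal (apply_schurLift_mem hE x)
  have hw0 : (⟨_, hw⟩ : Kᗮ) = 0 := by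
    simpa [hEw] using (congrArg (· ⟨_, hw⟩) (Ring.inverse_mul_cancel _ hE)).symm
  exact ⟨x, (sub_eq_zero.mp (congrArg Subtype.val hw0)).symm⟩

theorem finrank_ker_schurComplement :
    finrank ℝ (LinearMap.ker (schurComplement K T : K →ₗ[ℝ] K)) =
      finrank ℝ (LinearMap.ker (T : H →ₗ[ℝ] H)) := by
  have hker : LinearMap.ker (schurComplement K T : K →ₗ[ℝ] K) =
      (LinearMap.ker (T : H →ₗ[ℝ] H)).comap (schurLift K T : K →ₗ[ℝ] H) := by
    ext x
    simp only [LinearMap.mem_ker, Submodule.mem_comap, ContinuousLinearMap.coe_coe,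
      ← coe_schurComplement_apply hE, ZeroMemClass.coe_eq_zero]
  rw [hker, (Submodule.equivMapOfInjective _ schurLift_injective _).finrank_eq,
    Submodule.map_comap_eq_of_le (ker_le_range_schurLift hE)]

theorem inner_schurComplement_left (hT : ∀ x y, ⟪T x, y⟫ = -⟪x, T y⟫) (x y : K) :
    ⟪schurComplement K T x, y⟫ = -⟪x, schurComplement K T y⟫ := by
  rw [Submodule.coe_inner, Submodule.coe_inner, coe_schurComplement_apply hE,
    coe_schurComplement_apply hE, ← inner_schurLift_right (apply_schurLift_mem hE x), hT,
    real_inner_comm, inner_schurLift_right (apply_schurLift_mem hE y), real_inner_comm]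

theorem finrank_ker_mod_two_eq_of_isUnit_orthogonalCompression [FiniteDimensional ℝ K]
    (hT : ∀ x y, ⟪T x, y⟫ = -⟪x, T y⟫) :
    finrank ℝ (LinearMap.ker (T : H →ₗ[ℝ] H)) % 2 = finrank ℝ K % 2 := by
  rw [← finrank_ker_schurComplement hE]
  exact LinearMap.finrank_ker_mod_two_of_skew (inner_schurComplement_left hE hT)

end Compression

section Perturbation

variable {H : Type*} [NormedAddCommGroup H] [InnerProductSpace ℝ H] [CompleteSpace H]

theorem ContinuousLinearMap.inner_apply_eq_neg_of_adjoint_eq_neg {T : H →L[ℝ] H}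
    (hT : ContinuousLinearMap.adjoint T = -T) (x y : H) : ⟪T x, y⟫ = -⟪x, T y⟫ := by
  rw [← ContinuousLinearMap.adjoint_inner_right, hT, neg_apply, inner_neg_right]

theorem ContinuousLinearMap.range_eq_orthogonal_ker_of_adjoint_eq_neg {T : H →L[ℝ] H}
    (hT : ContinuousLinearMap.adjoint T = -T)
    (hclosed : IsClosed (LinearMap.range (T : H →ₗ[ℝ] H) : Set H)) :
    LinearMap.range (T : H →ₗ[ℝ] H) = (LinearMap.ker (T : H →ₗ[ℝ] H))ᗮ := by
  have hperp : (LinearMap.range (T : H →ₗ[ℝ] H))ᗮ = LinearMap.ker (T : H →ₗ[ℝ] H) := by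
    ext x
    simpa [hT] using congrArg (x ∈ ·) T.orthogonal_range
  rw [← hperp, Submodule.orthogonal_orthogonal_eq_closure, hclosed.submodule_topologicalClosure_eq]

theorem ContinuousLinearMap.isUnit_orthogonalCompression_ker {T : H →L[ℝ] H}
    (hT : ContinuousLinearMap.adjoint T = -T)
    (hclosed : IsClosed (LinearMap.range (T : H →ₗ[ℝ] H) : Set H)) :
    IsUnit (orthogonalCompression (LinearMap.ker (T : H →ₗ[ℝ] H)) T) := by
  have hrange := T.range_eq_orthogonal_ker_of_adjoint_eq_neg hT hclosed
  set K := LinearMap.ker (T : H →ₗ[ℝ] H)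
  rw [ContinuousLinearMap.isUnit_iff_bijective]
  refine ⟨(injective_iff_map_eq_zero _).mpr fun w hw => Subtype.ext ?_, fun v => ?_⟩
  · have hTw : T w ∈ Kᗮᗮ := Submodule.orthogonalProjectionOnto_eq_zero_iff.mp hw
    have hTw' : T w ∈ Kᗮ := hrange.le (LinearMap.mem_range_self (T : H →ₗ[ℝ] H) w)
    have hwK : (w : H) ∈ K := Submodule.disjoint_def.mp Kᗮ.orthogonal_disjoint _ hTw' hTw
    exact Submodule.disjoint_def.mp K.orthogonal_disjoint _ hwK w.2
  · obtain ⟨u, hu⟩ := hrange.ge v.2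
    have hTQu : T (Kᗮ.starProjection u) = v := by
      have hPu : T (K.starProjection u) = 0 := K.starProjection_apply_mem u
      rw [Submodule.starProjection_orthogonal_val, map_sub, hPu, sub_zero, ← hu]
      rfl
    refine ⟨Kᗮ.orthogonalProjectionOnto u, Subtype.ext ?_⟩
    change Kᗮ.starProjection (T (Kᗮ.starProjection u)) = v
    rw [hTQu, Submodule.starProjection_eq_self_iff]
    exact v.2

theorem isOpen_setOf_isUnit_orthogonalCompression (K : Submodule ℝ H)
    [K.HasOrthogonalProjection] :
    IsOpen {T : H →L[ℝ] H | IsUnit (orthogonalCompression K T)} :=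
  have hcont : Continuous (orthogonalCompression K) :=
    continuous_const.clm_comp (continuous_id.clm_comp continuous_const)
  hcont.isOpen_preimage _ (Units.isOpen (R := Kᗮ →L[ℝ] Kᗮ))

theorem ContinuousLinearMap.eventually_finrank_ker_mod_two_eq {D₀ : H →L[ℝ] H}
    (hD₀ : ContinuousLinearMap.adjoint D₀ = -D₀)
    [FiniteDimensional ℝ (LinearMap.ker (D₀ : H →ₗ[ℝ] H))]
    (hclosed : IsClosed (LinearMap.range (D₀ : H →ₗ[ℝ] H) : Set H)) :
    ∀ᶠ T in 𝓝 D₀, ContinuousLinearMap.adjoint T = -T →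
      finrank ℝ (LinearMap.ker (T : H →ₗ[ℝ] H)) % 2 =
        finrank ℝ (LinearMap.ker (D₀ : H →ₗ[ℝ] H)) % 2 := by
  filter_upwards [(isOpen_setOf_isUnit_orthogonalCompression _).mem_nhds
    (D₀.isUnit_orthogonalCompression_ker hD₀ hclosed)] with T hE hT
  exact finrank_ker_mod_two_eq_of_isUnit_orthogonalCompression hE
    (T.inner_apply_eq_neg_of_adjoint_eq_neg hT)

end Perturbation

/-- Atiyah–Singer mod-2 index invariance: if `D t`, `t ∈ [0,1]`, is a norm-continuous
path of bounded skew-adjoint Fredholm operators on a real Hilbert space, then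
`dim ker D 0 ≡ dim ker D 1 (mod 2)`. -/
theorem mod_two_index_invariance {H : Type*} [NormedAddCommGroup H]
    [InnerProductSpace ℝ H] [CompleteSpace H]
    (D : ℝ → H →L[ℝ] H) (hcont : Continuous D)
    (hskew : ∀ t ∈ Set.Icc (0 : ℝ) 1, ContinuousLinearMap.adjoint (D t) = -(D t))
    (hfred : ∀ t ∈ Set.Icc (0 : ℝ) 1, IsFredholm (D t)) :
    Module.finrank ℝ (LinearMap.ker (D 0 : H →ₗ[ℝ] H)) % 2
      = Module.finrank ℝ (LinearMap.ker (D 1 : H →ₗ[ℝ] H)) % 2 := by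
  have hlocal : ContinuousOn (fun t => finrank ℝ (LinearMap.ker (D t : H →ₗ[ℝ] H)) % 2)
      (Set.Icc 0 1) := by
    intro t ht
    obtain ⟨hfin, -, hclosed⟩ := hfred t ht
    have hnear := hcont.continuousAt.eventually
      ((D t).eventually_finrank_ker_mod_two_eq (hskew t ht) hclosed)
    rw [ContinuousWithinAt, nhds_discrete, tendsto_pure]
    filter_upwards [self_mem_nhdsWithin, nhdsWithin_le_nhds hnear] with s hs hs' using
      hs' (hskew s hs)
  exact isPreconnected_Icc.constant hlocal (Set.left_mem_Icc.2 zero_le_one)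
    (Set.right_mem_Icc.2 zero_le_one)
end
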